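/- arXiv:1101.3381 — 3 statements merged into one kernel-verified Lean document; each statement's English description precedes it below -/
import Mathlib

section
/- Let I be a ternary independence relation on a finite set V satisfying Intersection, Decomposition, and Strong Union, and let B(X) ⊆ V \ {X} be a Markov boundary of X, i.e., a minimal set such that for all W ∉ B(X) ∪ {X}, I(X;W|B(X)\{W}). Then for every W ≠ X in V, I(X;W|B(X)\{X,W}) implies W ∉ B(X). -/
/-!
If `W ∈ B` were independent of `X` given `B \ {W}`, minimality of `B` would supply some `Y ∉ B`
with `¬ I(X; Y | B \ {W})`. The blanket property gives `I(X; Y | B)`, and strong union turns the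
assumption into `I(X; W | (B \ {W}) ∪ {Y})`; intersection and decomposition then yield
`I(X; Y | B \ {W})`, a contradiction.
-/

theorem indep_of_indep_insert {V : Type*} [DecidableEq V] {I : V → V → Finset V → Prop}
    {Ipair : V → V → V → Finset V → Prop}
    (intersection : ∀ X Y W (Z : Finset V),
      I X Y (insert W Z) → I X W (insert Y Z) → Ipair X Y W Z)
    (decomposition : ∀ X Y W (Z : Finset V), Ipair X Y W Z → I X Y Z ∧ I X W Z)
    (strongUnion : ∀ X Y W (Z : Finset V), I X Y Z → I X Y (insert W Z))
    {X Y W : V} {Z : Finset V} (hY : I X Y (insert W Z)) (hW : I X W Z) : I X Y Z :=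
  (decomposition X Y W Z (intersection X Y W Z hY (strongUnion X W Y Z hW))).1

theorem markov_boundary_converse_general {V : Type*} [DecidableEq V]
    (I : V → V → Finset V → Prop) (Ipair : V → V → V → Finset V → Prop)
    (intersection : ∀ X Y W (Z : Finset V),
      I X Y (insert W Z) → I X W (insert Y Z) → Ipair X Y W Z)
    (decomposition : ∀ X Y W (Z : Finset V), Ipair X Y W Z → I X Y Z ∧ I X W Z)
    (strongUnion : ∀ X Y W (Z : Finset V), I X Y Z → I X Y (insert W Z))
    (X : V) (B : Finset V) (hXB : X ∉ B)
    (hblanket : ∀ W, W ≠ X → W ∉ B → I X W (B \ {W}))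
    (hmin : ∀ W ∈ B, ∃ Y, Y ∉ B ∧ Y ≠ X ∧ ¬ I X Y ((B \ {W}) \ {Y})) :
    ∀ W, W ≠ X → I X W (B \ {X, W}) → W ∉ B := by
  intro W _ hW hWB
  obtain ⟨Y, hYB, hYX, hY⟩ := hmin W hWB
  simp only [Finset.sdiff_singleton_eq_erase,
    Finset.erase_eq_of_notMem (mt Finset.mem_of_mem_erase hYB)] at hY
  have hYblanket : I X Y (insert W (B.erase W)) := by
    simpa only [Finset.insert_erase hWB, Finset.sdiff_singleton_eq_erase,
      Finset.erase_eq_of_notMem hYB] using hblanket Y hYX hYB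
  have hWcond : I X W (B.erase W) := by
    rwa [Finset.sdiff_insert, Finset.sdiff_singleton_eq_erase,
      Finset.erase_eq_of_notMem (mt Finset.mem_of_mem_erase hXB)] at hW
  exact hY (indep_of_indep_insert intersection decomposition strongUnion hYblanket hWcond)

/-- Boundary converse lemma: if `B` is a Markov boundary of `X` (blanket property plus
minimality), then independence of `X` and `W` given `B \ {X,W}` implies `W ∉ B`. -/
theorem markov_boundary_converse {V : Type*} [DecidableEq V] [Fintype V]
    (I : V → V → Finset V → Prop) (Ipair : V → V → V → Finset V → Prop)
    (intersection : ∀ X Y W (Z : Finset V),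
      I X Y (insert W Z) → I X W (insert Y Z) → Ipair X Y W Z)
    (decomposition : ∀ X Y W (Z : Finset V), Ipair X Y W Z → I X Y Z ∧ I X W Z)
    (strongUnion : ∀ X Y W (Z : Finset V), I X Y Z → I X Y (insert W Z))
    (X : V) (B : Finset V) (hXB : X ∉ B)
    (hblanket : ∀ W, W ≠ X → W ∉ B → I X W (B \ {W}))
    (hmin : ∀ W ∈ B, ∃ Y, Y ∉ B ∧ Y ≠ X ∧ ¬ I X Y ((B \ {W}) \ {Y})) :
    ∀ W, W ≠ X → I X W (B \ {X, W}) → W ∉ B :=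
  markov_boundary_converse_general I Ipair intersection decomposition strongUnion X B hXB hblanket
    hmin
end

section
/- Let I be a ternary independence relation on a finite set V satisfying Intersection, Decomposition, and Strong Union, and let B(X) be a Markov boundary of X for each X ∈ V. Then for all distinct X, W: W ∈ B(X) if and only if ¬I(X;W|B(X)\{X,W}). -/
/-!
If `W ∈ B(X)` were independent of `X` given `B(X) \ {W}`, then `B(X) \ {W}` would still be a
blanket: for `Y ∉ B(X)` we know `I(X;Y|B(X) \ {Y})`, and Strong Union, Intersection and
Decomposition let us remove `W` from this conditioning set. This contradicts minimality. The
converse is the blanket property itself.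
-/

section MarkovBoundary

variable {V : Type*} [DecidableEq V]

def IsMarkovBlanket (I : V → V → Finset V → Prop) (X : V) (S : Finset V) : Prop :=
  ∀ Y, Y ≠ X → Y ∉ S → I X Y (S \ {Y})

/-- The auxiliary lemma `¬I(X;Y|Z) ∧ I(X;Y|Z∪{W}) ⟹ ¬I(X;W|Z)`, in contrapositive form. -/
theorem indep_of_indep_insert_of_indep {I : V → V → Finset V → Prop}
    {Ipair : V → V → V → Finset V → Prop}
    (intersection : ∀ X Y W (Z : Finset V),
      I X Y (insert W Z) → I X W (insert Y Z) → Ipair X Y W Z)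
    (decomposition : ∀ X Y W (Z : Finset V), Ipair X Y W Z → I X Y Z ∧ I X W Z)
    (strongUnion : ∀ X Y W (Z : Finset V), I X Y Z → I X Y (insert W Z))
    {X Y W : V} {Z : Finset V} (hY : I X Y (insert W Z)) (hW : I X W Z) : I X Y Z :=
  (decomposition X Y W Z (intersection X Y W Z hY (strongUnion X W Y Z hW))).1

theorem IsMarkovBlanket.sdiff_singleton {I : V → V → Finset V → Prop}
    {Ipair : V → V → V → Finset V → Prop}
    (intersection : ∀ X Y W (Z : Finset V),
      I X Y (insert W Z) → I X W (insert Y Z) → Ipair X Y W Z)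
    (decomposition : ∀ X Y W (Z : Finset V), Ipair X Y W Z → I X Y Z ∧ I X W Z)
    (strongUnion : ∀ X Y W (Z : Finset V), I X Y Z → I X Y (insert W Z))
    {X W : V} {S : Finset V} (hS : IsMarkovBlanket I X S) (hW : W ∈ S)
    (hindep : I X W (S \ {W})) : IsMarkovBlanket I X (S \ {W}) := by
  intro Y hYX hY
  by_cases hYW : Y = W
  · subst hYW
    simpa using hindep
  have hYS : Y ∉ S := by simpa [hYW] using hY
  have hrest : (S \ {W}) \ {Y} = S \ {W} := by simpa using hY
  have hsplit : S \ {Y} = insert W (S \ {W}) := by grind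
  rw [hrest]
  have hYrest : I X Y (insert W (S \ {W})) := hsplit ▸ hS Y hYX hYS
  exact indep_of_indep_insert_of_indep intersection decomposition strongUnion hYrest hindep

end MarkovBoundary

theorem boundary_membership_iff_dependence_general {V : Type*} [DecidableEq V]
    (I : V → V → Finset V → Prop) (Ipair : V → V → V → Finset V → Prop)
    (intersection : ∀ X Y W (Z : Finset V),
      I X Y (insert W Z) → I X W (insert Y Z) → Ipair X Y W Z)
    (decomposition : ∀ X Y W (Z : Finset V), Ipair X Y W Z → I X Y Z ∧ I X W Z)
    (strongUnion : ∀ X Y W (Z : Finset V), I X Y Z → I X Y (insert W Z))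
    (B : V → Finset V) (hXB : ∀ X, X ∉ B X)
    (hblanket : ∀ X W, W ≠ X → W ∉ B X → I X W (B X \ {W}))
    (hmin : ∀ X, ∀ B' ⊂ B X, ¬ (∀ W, W ≠ X → W ∉ B' → I X W (B' \ {W}))) :
    ∀ X W, X ≠ W → (W ∈ B X ↔ ¬ I X W (B X \ {X, W})) := by
  intro X W hXW
  rw [Finset.sdiff_insert_of_notMem (hXB X)]
  constructor
  · intro hW hindep
    have hsmaller : B X \ {W} ⊂ B X := Finset.sdiff_ssubset (by simpa using hW) (by simp)
    exact hmin X _ hsmaller <|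
      IsMarkovBlanket.sdiff_singleton intersection decomposition strongUnion (hblanket X) hW hindep
  · intro hdep
    by_contra hW
    exact hdep (hblanket X W hXW.symm hW)

/-- Membership in the Markov boundary is characterized by dependence given the rest of
the boundary: `W ∈ B(X) ⟺ ¬I(X;W|B(X)\{X,W})`. -/
theorem boundary_membership_iff_dependence {V : Type*} [DecidableEq V] [Fintype V]
    (I : V → V → Finset V → Prop) (Ipair : V → V → V → Finset V → Prop)
    (intersection : ∀ X Y W (Z : Finset V),
      I X Y (insert W Z) → I X W (insert Y Z) → Ipair X Y W Z)
    (decomposition : ∀ X Y W (Z : Finset V), Ipair X Y W Z → I X Y Z ∧ I X W Z)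
    (strongUnion : ∀ X Y W (Z : Finset V), I X Y Z → I X Y (insert W Z))
    (B : V → Finset V) (hXB : ∀ X, X ∉ B X)
    (hblanket : ∀ X W, W ≠ X → W ∉ B X → I X W (B X \ {W}))
    (hmin : ∀ X, ∀ B' ⊂ B X, ¬ (∀ W, W ≠ X → W ∉ B' → I X W (B' \ {W}))) :
    ∀ X W, X ≠ W → (W ∈ B X ↔ ¬ I X W (B X \ {X, W})) :=
  boundary_membership_iff_dependence_general I Ipair intersection decomposition strongUnion B hXB
    hblanket hmin
end

section
/- Let I be a ternary independence relation satisfying Intersection, Decomposition, and Strong Union, and suppose I is symmetric in its first two arguments (I(X;Y|Z) ⟺ I(Y;X|Z)). If B(X) is a Markov boundary of X for every X ∈ V and the graph G is defined by connecting X to all members of B(X), then the edge relation of G is symmetric: Y ∈ B(X) implies X ∈ B(Y). -/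
/-!
Suppose `Y ∈ B X` but `X ∉ B Y`. Then `I(X;Y | B Y \ {X})`, and by Strong Union `Y` stays
independent of `X` given `B X \ {Y}` together with the variables of `B Y \ {X}` outside `B X`.
Each of these extra variables `W` is independent of `X` given `B X`, so Intersection followed by
Decomposition removes them one at a time, leaving `I(X;Y | B X \ {Y})`. The same two axioms then
show that `B X \ {Y}` is already a blanket of `X`, contradicting the minimality of `B X`.
-/

namespace MarkovBoundary

variable {V : Type*} [DecidableEq V]

def StrongUnion (I : V → V → Finset V → Prop) : Prop :=
  ∀ X Y W (Z : Finset V), I X Y Z → I X Y (insert W Z)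

def Intersection (I : V → V → Finset V → Prop) (Ipair : V → V → V → Finset V → Prop) : Prop :=
  ∀ X Y W (Z : Finset V), I X Y (insert W Z) → I X W (insert Y Z) → Ipair X Y W Z

def Decomposition (I : V → V → Finset V → Prop) (Ipair : V → V → V → Finset V → Prop) : Prop :=
  ∀ X Y W (Z : Finset V), Ipair X Y W Z → I X Y Z ∧ I X W Z

def IsBlanket (I : V → V → Finset V → Prop) (X : V) (S : Finset V) : Prop :=
  ∀ W, W ≠ X → W ∉ S → I X W (S \ {W})

variable {I : V → V → Finset V → Prop} {Ipair : V → V → V → Finset V → Prop}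

theorem StrongUnion.mono (hSU : StrongUnion I) {X Y : V} {Z Z' : Finset V} (hZ : Z ⊆ Z')
    (h : I X Y Z) : I X Y Z' := by
  have hunion : ∀ T : Finset V, I X Y (Z ∪ T) := by
    intro T
    induction T using Finset.induction_on with
    | empty => simpa using h
    | insert W T _ ih => simpa only [Finset.union_insert] using hSU _ _ _ _ ih
  simpa only [Finset.union_eq_right.mpr hZ] using hunion Z'

theorem indep_of_indep_insert_of_indep_insert (hinter : Intersection I Ipair)
    (hdec : Decomposition I Ipair) {X Y W : V} {Z : Finset V}
    (hY : I X Y (insert W Z)) (hW : I X W (insert Y Z)) : I X Y Z ∧ I X W Z :=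
  hdec _ _ _ _ (hinter _ _ _ _ hY hW)

theorem IsBlanket.indep_of_subset (hSU : StrongUnion I) {X W : V} {S Z : Finset V}
    (hS : IsBlanket I X S) (hWX : W ≠ X) (hWS : W ∉ S) (hZ : S ⊆ Z) : I X W Z :=
  hSU.mono (Finset.sdiff_subset.trans hZ) (hS W hWX hWS)

theorem IsBlanket.indep_sdiff_of_indep_union (hSU : StrongUnion I)
    (hinter : Intersection I Ipair) (hdec : Decomposition I Ipair) {X Y : V} {S : Finset V}
    (hS : IsBlanket I X S) (T : Finset V) (hT : ∀ W ∈ T, W ≠ X ∧ W ∉ S)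
    (h : I X Y (S \ {Y} ∪ T)) : I X Y (S \ {Y}) := by
  induction T using Finset.induction_on with
  | empty => simpa using h
  | insert W T _ ih =>
    obtain ⟨hWX, hWS⟩ := hT W (Finset.mem_insert_self W T)
    rw [Finset.union_insert] at h
    have hSsub : S ⊆ insert Y (S \ {Y} ∪ T) := Finset.subset_insert_iff.mpr
      ((Finset.sdiff_singleton_eq_erase Y S).symm.subset.trans Finset.subset_union_left)
    refine ih (fun U hU => hT U (Finset.mem_insert_of_mem hU)) ?_
    exact (indep_of_indep_insert_of_indep_insert hinter hdec h
      (hS.indep_of_subset hSU hWX hWS hSsub)).1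

theorem IsBlanket.sdiff_singleton (hSU : StrongUnion I) (hinter : Intersection I Ipair)
    (hdec : Decomposition I Ipair) {X Y : V} {S : Finset V} (hS : IsBlanket I X S)
    (h : I X Y (S \ {Y})) : IsBlanket I X (S \ {Y}) := by
  intro W hWX hW
  by_cases hWY : W = Y
  · subst hWY
    simpa using h
  have hWS : W ∉ S := fun hWS => hW (Finset.mem_sdiff.mpr ⟨hWS, by simpa using hWY⟩)
  rw [Finset.sdiff_singleton_eq_erase, Finset.erase_eq_of_notMem hW]
  have hSsub : S ⊆ insert Y (S \ {Y}) :=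
    Finset.subset_insert_iff.mpr (Finset.sdiff_singleton_eq_erase Y S).symm.subset
  exact (indep_of_indep_insert_of_indep_insert hinter hdec
    (hSU.mono (Finset.subset_insert W _) h) (hS.indep_of_subset hSU hWX hWS hSsub)).2

end MarkovBoundary

theorem boundary_graph_symmetric_general {V : Type*} [DecidableEq V]
    (I : V → V → Finset V → Prop) (Ipair : V → V → V → Finset V → Prop)
    (intersection : ∀ X Y W (Z : Finset V),
      I X Y (insert W Z) → I X W (insert Y Z) → Ipair X Y W Z)
    (decomposition : ∀ X Y W (Z : Finset V), Ipair X Y W Z → I X Y Z ∧ I X W Z)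
    (strongUnion : ∀ X Y W (Z : Finset V), I X Y Z → I X Y (insert W Z))
    (symm : ∀ X Y (Z : Finset V), I X Y Z ↔ I Y X Z)
    (B : V → Finset V) (hXB : ∀ X, X ∉ B X)
    (hblanket : ∀ X W, W ≠ X → W ∉ B X → I X W (B X \ {W}))
    (hmin : ∀ X, ∀ B' ⊂ B X, ¬ (∀ W, W ≠ X → W ∉ B' → I X W (B' \ {W}))) :
    ∀ X Y, Y ∈ B X → X ∈ B Y := by
  have hSU : MarkovBoundary.StrongUnion I := strongUnion
  intro X Y hY
  by_cases hXY : X = Y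
  · exact hXY ▸ hY
  by_contra hX
  have hBX : MarkovBoundary.IsBlanket I X (B X) := hblanket X
  have hYX : I X Y (B Y \ {X}) := (symm _ _ _).mpr (hblanket Y X hXY hX)
  have hunion : I X Y (B X \ {Y} ∪ (B Y \ {X}) \ B X) := by
    refine hSU.mono (fun b hb => ?_) hYX
    have hbY : b ≠ Y := by rintro rfl; exact hXB b (Finset.mem_sdiff.mp hb).1
    by_cases hbX : b ∈ B X <;> simp_all
  have hcore : I X Y (B X \ {Y}) :=
    hBX.indep_sdiff_of_indep_union hSU intersection decomposition _
      (fun W hW => by simp only [Finset.mem_sdiff, Finset.mem_singleton] at hW; tauto) hunion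
  exact hmin X _ (by simpa [Finset.sdiff_singleton_eq_erase] using Finset.erase_ssubset hY)
    (hBX.sdiff_singleton hSU intersection decomposition hcore)

/-- Symmetry of the boundary-based graph: if the independence relation is symmetric
(and satisfies Intersection, Decomposition, Strong Union), then the edge relation
built from Markov boundaries is symmetric: `Y ∈ B(X) → X ∈ B(Y)`. -/
theorem boundary_graph_symmetric {V : Type*} [DecidableEq V] [Fintype V]
    (I : V → V → Finset V → Prop) (Ipair : V → V → V → Finset V → Prop)
    (intersection : ∀ X Y W (Z : Finset V),
      I X Y (insert W Z) → I X W (insert Y Z) → Ipair X Y W Z)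
    (decomposition : ∀ X Y W (Z : Finset V), Ipair X Y W Z → I X Y Z ∧ I X W Z)
    (strongUnion : ∀ X Y W (Z : Finset V), I X Y Z → I X Y (insert W Z))
    (symm : ∀ X Y (Z : Finset V), I X Y Z ↔ I Y X Z)
    (B : V → Finset V) (hXB : ∀ X, X ∉ B X)
    (hblanket : ∀ X W, W ≠ X → W ∉ B X → I X W (B X \ {W}))
    (hmin : ∀ X, ∀ B' ⊂ B X, ¬ (∀ W, W ≠ X → W ∉ B' → I X W (B' \ {W}))) :
    ∀ X Y, Y ∈ B X → X ∈ B Y :=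
  boundary_graph_symmetric_general I Ipair intersection decomposition strongUnion symm B hXB
    hblanket hmin
end
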